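/- Let K be a field of characteristic not 2, and let α₁, α₂, α₃ be distinct elements of K. Let E be the elliptic curve y² = (x−α₁)(x−α₂)(x−α₃). A point P = (x₀, y₀) ∈ E(K) is divisible by 2 in E(K) (i.e., there exists Q ∈ E(K) with 2Q = P) if and only if all three elements x₀−α₁, x₀−α₂, x₀−α₃ are squares in K. -/

import Mathlib

/-!
Let `f = (X - α₁)(X - α₂)(X - α₃)`. If `Q = (x, y)` with `y ≠ 0` and `ℓ` is the tangent line at `Q`,
then `ℓ` meets `E` at `Q` twice and at `-2Q`, so `f - ℓ² = (X - x)² (X - x(2Q))`; evaluating at the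
root `αᵢ` gives `x(2Q) - αᵢ = (ℓ(αᵢ) / (αᵢ - x))²`.

Conversely, write `x₀ - αᵢ = rᵢ²` with the signs chosen so that `y₀ = r₁r₂r₃`. The point
`Q = (x₀ + r₁r₂ + r₁r₃ + r₂r₃, (r₁ + r₂)(r₁ + r₃)(r₂ + r₃))` lies on `E`, has tangent slope
`r₁ + r₂ + r₃`, and `2Q = (x₀, y₀)`; distinctness of the `αᵢ` makes the second coordinate nonzero.
-/

/-- The elliptic curve `y² = (x − α₁)(x − α₂)(x − α₃)` as an affine Weierstrass curve. -/
def cubicCurve {K : Type*} [Field K] (α₁ α₂ α₃ : K) : WeierstrassCurve.Affine K :=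
  { a₁ := 0, a₂ := -(α₁ + α₂ + α₃), a₃ := 0,
    a₄ := α₁ * α₂ + α₂ * α₃ + α₃ * α₁, a₆ := -(α₁ * α₂ * α₃) }

open Polynomial WeierstrassCurve.Affine

namespace WeierstrassCurve.Affine

variable {F : Type*} [Field F] {W : WeierstrassCurve.Affine F}

lemma eval_addPolynomial (x y ℓ α : F) :
    (W.addPolynomial x y ℓ).eval α = W.polynomial.evalEval α (ℓ * (α - x) + y) := by
  rw [addPolynomial_eq, evalEval_polynomial]
  simp only [Cubic.toPoly, eval_neg, eval_add, eval_mul, eval_C, eval_pow, eval_X]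
  ring

lemma evalEval_polynomial_line_slope [DecidableEq F] {x₁ x₂ y₁ y₂ : F} (h₁ : W.Equation x₁ y₁)
    (h₂ : W.Equation x₂ y₂) (hxy : ¬(x₁ = x₂ ∧ y₁ = W.negY x₂ y₂)) (α : F) :
    W.polynomial.evalEval α (W.slope x₁ x₂ y₁ y₂ * (α - x₁) + y₁) =
      -((α - x₁) * (α - x₂) * (α - W.addX x₁ x₂ (W.slope x₁ x₂ y₁ y₂))) := by
  rw [← eval_addPolynomial, addPolynomial_slope h₁ h₂ hxy]
  simp only [eval_neg, eval_mul, eval_sub, eval_X, eval_C]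

end WeierstrassCurve.Affine

lemma add_ne_zero_of_sub_sq_ne {R : Type*} [Ring R] {a r s : R} (h : a - r ^ 2 ≠ a - s ^ 2) :
    r + s ≠ 0 :=
  fun hrs => h (by rw [eq_neg_of_add_eq_zero_left hrs, neg_sq])

section cubicCurve

variable {K : Type*} [Field K] {α₁ α₂ α₃ : K}

lemma cubicCurve_evalEval_polynomial (x y : K) :
    (cubicCurve α₁ α₂ α₃).polynomial.evalEval x y = y ^ 2 - (x - α₁) * (x - α₂) * (x - α₃) := by
  rw [evalEval_polynomial]
  simp only [cubicCurve]
  ring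

lemma cubicCurve_equation_iff (x y : K) :
    (cubicCurve α₁ α₂ α₃).Equation x y ↔ y ^ 2 = (x - α₁) * (x - α₂) * (x - α₃) := by
  rw [Equation, cubicCurve_evalEval_polynomial, sub_eq_zero]

lemma cubicCurve_negY (x y : K) : (cubicCurve α₁ α₂ α₃).negY x y = -y := by
  simp only [negY, cubicCurve]
  ring

lemma cubicCurve_nonsingular_of_two_mul_ne_zero {x y : K}
    (h : y ^ 2 = (x - α₁) * (x - α₂) * (x - α₃)) (hy : 2 * y ≠ 0) :
    (cubicCurve α₁ α₂ α₃).Nonsingular x y := by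
  refine (nonsingular_iff' x y).mpr ⟨(cubicCurve_equation_iff x y).mpr h, Or.inr ?_⟩
  simpa only [cubicCurve, zero_mul, add_zero] using hy

lemma cubicCurve_exists_sq_eq_addX_sub [DecidableEq K] {x y α : K}
    (h : (cubicCurve α₁ α₂ α₃).Equation x y) (hy : y ≠ (cubicCurve α₁ α₂ α₃).negY x y)
    (hα : (α - α₁) * (α - α₂) * (α - α₃) = 0) :
    ∃ r : K, r ^ 2 = (cubicCurve α₁ α₂ α₃).addX x x ((cubicCurve α₁ α₂ α₃).slope x x y y) - α := by
  set ℓ := (cubicCurve α₁ α₂ α₃).slope x x y y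
  have hx : α - x ≠ 0 := by
    intro hαx
    rw [cubicCurve_negY] at hy
    rw [cubicCurve_equation_iff, ← sub_eq_zero.mp hαx, hα, sq_eq_zero_iff] at h
    exact hy (by rw [h, neg_zero])
  have hline := evalEval_polynomial_line_slope h h (fun hxy => hy hxy.2) α
  rw [cubicCurve_evalEval_polynomial, hα, sub_zero] at hline
  refine ⟨(ℓ * (α - x) + y) / (α - x), ?_⟩
  rw [div_pow, hline]
  field_simp
  ring

lemma cubicCurve_exists_sq_of_two_smul_eq_some [DecidableEq K] {x₀ y₀ α : K}
    {hP : (cubicCurve α₁ α₂ α₃).Nonsingular x₀ y₀} {Q : (cubicCurve α₁ α₂ α₃).Point}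
    (hQ : 2 • Q = .some x₀ y₀ hP) (hα : (α - α₁) * (α - α₂) * (α - α₃) = 0) :
    ∃ r : K, r ^ 2 = x₀ - α := by
  rw [two_smul] at hQ
  rcases Q with _ | @⟨x, y, h⟩
  · exact absurd hQ.symm (Point.some_ne_zero hP)
  by_cases hy : y = (cubicCurve α₁ α₂ α₃).negY x y
  · rw [Point.add_self_of_Y_eq hy] at hQ
    exact absurd hQ.symm (Point.some_ne_zero hP)
  rw [Point.add_self_of_Y_ne hy, Point.some.injEq] at hQ
  exact hQ.1 ▸ cubicCurve_exists_sq_eq_addX_sub h.1 hy hα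

lemma cubicCurve_exists_two_smul_eq_some [DecidableEq K] (h2 : (2 : K) ≠ 0) {x₀ r₁ r₂ r₃ : K}
    (h12 : r₁ + r₂ ≠ 0) (h13 : r₁ + r₃ ≠ 0) (h23 : r₂ + r₃ ≠ 0)
    (hP : (cubicCurve (x₀ - r₁ ^ 2) (x₀ - r₂ ^ 2) (x₀ - r₃ ^ 2)).Nonsingular x₀ (r₁ * r₂ * r₃)) :
    ∃ Q : (cubicCurve (x₀ - r₁ ^ 2) (x₀ - r₂ ^ 2) (x₀ - r₃ ^ 2)).Point,
      2 • Q = .some x₀ (r₁ * r₂ * r₃) hP := by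
  obtain ⟨x, hx⟩ : ∃ x : K, x = x₀ + (r₁ * r₂ + r₁ * r₃ + r₂ * r₃) := ⟨_, rfl⟩
  obtain ⟨y, hy⟩ : ∃ y : K, y = (r₁ + r₂) * (r₁ + r₃) * (r₂ + r₃) := ⟨_, rfl⟩
  have h2y : 2 * y ≠ 0 := hy ▸ mul_ne_zero h2 (mul_ne_zero (mul_ne_zero h12 h13) h23)
  have hQ : (cubicCurve (x₀ - r₁ ^ 2) (x₀ - r₂ ^ 2) (x₀ - r₃ ^ 2)).Nonsingular x y :=
    cubicCurve_nonsingular_of_two_mul_ne_zero (by rw [hx, hy]; ring) h2y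
  have hyne : y ≠ (cubicCurve (x₀ - r₁ ^ 2) (x₀ - r₂ ^ 2) (x₀ - r₃ ^ 2)).negY x y := by
    rw [cubicCurve_negY]
    exact fun h => h2y (by linear_combination h)
  -- `x - αᵢ = (rᵢ + rⱼ)(rᵢ + rₖ)`, so the slope `f'(x) / 2y = Σᵢ y / (2 (x - αᵢ))` is `r₁ + r₂ + r₃`
  have hslope :
      (cubicCurve (x₀ - r₁ ^ 2) (x₀ - r₂ ^ 2) (x₀ - r₃ ^ 2)).slope x x y y = r₁ + r₂ + r₃ := by
    rw [slope_of_Y_ne rfl hyne, cubicCurve_negY, div_eq_iff (by rwa [sub_neg_eq_add, ← two_mul])]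
    simp only [cubicCurve]
    rw [hx, hy]
    ring
  refine ⟨Point.some x y hQ, ?_⟩
  rw [two_smul, Point.add_self_of_Y_ne hyne, Point.some.injEq]
  simp only [addY, negAddY, addX, hslope, cubicCurve_negY]
  simp only [cubicCurve]
  rw [hx, hy]
  constructor <;> ring

end cubicCurve

open Classical in
theorem divisible_by_two_iff_squares {K : Type*} [Field K] (h2 : (2 : K) ≠ 0)
    (α₁ α₂ α₃ : K) (h12 : α₁ ≠ α₂) (h13 : α₁ ≠ α₃) (h23 : α₂ ≠ α₃)
    (x₀ y₀ : K) (hP : (cubicCurve α₁ α₂ α₃).Nonsingular x₀ y₀) :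
    (∃ Q : (cubicCurve α₁ α₂ α₃).Point, 2 • Q = .some x₀ y₀ hP) ↔
      (∃ r : K, r ^ 2 = x₀ - α₁) ∧ (∃ r : K, r ^ 2 = x₀ - α₂) ∧
        (∃ r : K, r ^ 2 = x₀ - α₃) := by
  constructor
  · rintro ⟨Q, hQ⟩
    exact ⟨cubicCurve_exists_sq_of_two_smul_eq_some hQ (by ring),
      cubicCurve_exists_sq_of_two_smul_eq_some hQ (by ring),
      cubicCurve_exists_sq_of_two_smul_eq_some hQ (by ring)⟩
  · rintro ⟨⟨r₁, hr₁⟩, ⟨r₂, hr₂⟩, ⟨r₃, hr₃⟩⟩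
    -- `y₀ = ±r₁r₂r₃`, and replacing `r₁` by `-r₁` fixes the sign
    obtain ⟨r₁, hr₁, rfl⟩ : ∃ r : K, r ^ 2 = x₀ - α₁ ∧ y₀ = r * r₂ * r₃ := by
      have hy₀ : y₀ ^ 2 = (r₁ * r₂ * r₃) ^ 2 := by
        rw [(cubicCurve_equation_iff x₀ y₀).mp hP.1, mul_pow, mul_pow, hr₁, hr₂, hr₃]
      rcases sq_eq_sq_iff_eq_or_eq_neg.mp hy₀ with h | h
      · exact ⟨r₁, hr₁, h⟩
      · exact ⟨-r₁, by rw [neg_sq, hr₁], by rw [h]; ring⟩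
    obtain rfl : α₁ = x₀ - r₁ ^ 2 := by rw [hr₁, sub_sub_cancel]
    obtain rfl : α₂ = x₀ - r₂ ^ 2 := by rw [hr₂, sub_sub_cancel]
    obtain rfl : α₃ = x₀ - r₃ ^ 2 := by rw [hr₃, sub_sub_cancel]
    exact cubicCurve_exists_two_smul_eq_some h2 (add_ne_zero_of_sub_sq_ne h12)
      (add_ne_zero_of_sub_sq_ne h13) (add_ne_zero_of_sub_sq_ne h23) hP
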